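/- arXiv:1906.10920 — 3 statements merged into one kernel-verified Lean document; each statement's English description precedes it below -/
import Mathlib

section
/- (Cone property of the LASSO.) In the linear-regression formulation of the LASSO with centered design matrix H_c ∈ ℝ^{n×m}, centered residual vector ε_c⁽ⁿ⁾ = f_c⁽ⁿ⁾ − H_c β*(f), and regularization parameter λ > 0: if n·λ ≥ 2·‖H_cᵀ ε_c⁽ⁿ⁾‖_∞, then the error vector û = β̂ₙˡᵃˢˢᵒ(f) − β*(f) lies in the cone 𝒞(S*; 3) = {u ∈ ℝᵐ : ‖u_{S̄*}‖₁ ≤ 3‖u_{S*}‖₁}, and ‖H_c û‖₂² ≤ 3·n·λ·‖û_{S*}‖₁. -/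
open scoped BigOperators

/-- Cone property of the LASSO.  With centered design `H_c`, centered
residual `ε_c = f_c − H_c β*` and regularization parameter `λ > 0`: if
`nλ ≥ 2‖H_cᵀ ε_c‖_∞`, then the error vector `û = β̂ − β*` lies in the cone
`𝒞(S*;3) = {u : ‖u_{S̄*}‖₁ ≤ 3‖u_{S*}‖₁}` and `‖H_c û‖₂² ≤ 3 n λ ‖û_{S*}‖₁`. -/
theorem lasso_cone_property
    (n m : ℕ) (lam : ℝ) (hlam : 0 < lam)
    (Hc : Matrix (Fin n) (Fin m) ℝ) (fc : Fin n → ℝ)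
    (βstar : Fin m → ℝ)
    (Sstar : Finset (Fin m)) (hSstar : ∀ k, k ∈ Sstar ↔ βstar k ≠ 0)
    (βhat : Fin m → ℝ)
    (hβhat : ∀ β : Fin m → ℝ,
      (2 * n : ℝ)⁻¹ * (∑ i, (fc i - Hc.mulVec βhat i) ^ 2) + lam * ∑ k, |βhat k|
        ≤ (2 * n : ℝ)⁻¹ * (∑ i, (fc i - Hc.mulVec β i) ^ 2) + lam * ∑ k, |β k|)
    (hcond : ∀ k, 2 * |Hc.transpose.mulVec (fun i => fc i - Hc.mulVec βstar i) k|
        ≤ (n : ℝ) * lam) :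
    (∑ k ∈ Sstarᶜ, |βhat k - βstar k|) ≤ 3 * ∑ k ∈ Sstar, |βhat k - βstar k| ∧
      (∑ i, (Hc.mulVec (fun k => βhat k - βstar k) i) ^ 2)
        ≤ 3 * n * lam * ∑ k ∈ Sstar, |βhat k - βstar k| := by
  set u : Fin m → ℝ := fun k => βhat k - βstar k with hu
  set ε : Fin n → ℝ := fun i => fc i - Hc.mulVec βstar i with hε
  set a : ℝ := ∑ k ∈ Sstar, |u k| with ha
  set b : ℝ := ∑ k ∈ Sstarᶜ, |u k| with hb
  have ha0 : 0 ≤ a := Finset.sum_nonneg fun k _ => abs_nonneg _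
  have hb0 : 0 ≤ b := Finset.sum_nonneg fun k _ => abs_nonneg _
  -- pointwise decomposition
  have hmv : ∀ i, Hc.mulVec u i = Hc.mulVec βhat i - Hc.mulVec βstar i := by
    intro i
    simp [hu, Matrix.mulVec, dotProduct, mul_sub, Finset.sum_sub_distrib]
  have hdec : ∀ i, fc i - Hc.mulVec βhat i = ε i - Hc.mulVec u i := by
    intro i; rw [hmv]; simp [hε]
  set T : ℝ := ∑ i, ε i * Hc.mulVec u i with hT
  set G : ℝ := ∑ i, (Hc.mulVec u i) ^ 2 with hG
  have hG0 : 0 ≤ G := Finset.sum_nonneg fun i _ => sq_nonneg _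
  have hQ : ∑ i, (fc i - Hc.mulVec βhat i) ^ 2
      = ∑ i, (ε i) ^ 2 - 2 * T + G := by
    have hpt : ∀ i, (fc i - Hc.mulVec βhat i) ^ 2
        = (ε i) ^ 2 - 2 * (ε i * Hc.mulVec u i) + (Hc.mulVec u i) ^ 2 := by
      intro i; rw [hdec i]; ring
    rw [Finset.sum_congr rfl fun i _ => hpt i, Finset.sum_add_distrib,
      Finset.sum_sub_distrib, ← Finset.mul_sum, hT, hG]
  -- transpose identity
  have hTt : T = ∑ k, Hc.transpose.mulVec ε k * u k := by
    have := Matrix.dotProduct_mulVec ε Hc u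
    simpa [hT, dotProduct, Matrix.mulVec_transpose] using this
  -- bound on T
  have hTb : T ≤ (n * lam / 2) * (a + b) := by
    have hab : a + b = ∑ k, |u k| := by
      rw [ha, hb]; exact Finset.sum_add_sum_compl Sstar _
    rw [hTt, hab, Finset.mul_sum]
    refine Finset.sum_le_sum fun k _ => ?_
    have h1 := hcond k
    have h2 : Hc.transpose.mulVec ε k * u k ≤ |Hc.transpose.mulVec ε k| * |u k| := by
      calc Hc.transpose.mulVec ε k * u k ≤ |Hc.transpose.mulVec ε k * u k| := le_abs_self _
        _ = _ := abs_mul _ _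
    calc Hc.transpose.mulVec ε k * u k ≤ |Hc.transpose.mulVec ε k| * |u k| := h2
      _ ≤ (↑n * lam / 2) * |u k| :=
        mul_le_mul_of_nonneg_right (by linarith) (abs_nonneg _)
  -- norm comparison
  have hzero : ∀ k ∈ Sstarᶜ, βstar k = 0 := by
    intro k hk
    have := (hSstar k).not
    simp only [Finset.mem_compl] at hk
    by_contra h; exact hk ((hSstar k).mpr h)
  have hnorm : (∑ k, |βstar k|) - (∑ k, |βhat k|) ≤ a - b := by
    have hs1 : ∑ k, |βstar k| = (∑ k ∈ Sstar, |βstar k|) + ∑ k ∈ Sstarᶜ, |βstar k| :=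
      (Finset.sum_add_sum_compl Sstar _).symm
    have hs2 : ∑ k, |βhat k| = (∑ k ∈ Sstar, |βhat k|) + ∑ k ∈ Sstarᶜ, |βhat k| :=
      (Finset.sum_add_sum_compl Sstar _).symm
    have hc1 : ∑ k ∈ Sstarᶜ, |βstar k| = 0 :=
      Finset.sum_eq_zero fun k hk => by rw [hzero k hk, abs_zero]
    have hc2 : ∑ k ∈ Sstarᶜ, |βhat k| = b := by
      rw [hb]; exact Finset.sum_congr rfl fun k hk => by rw [hu]; simp [hzero k hk]
    have hc3 : (∑ k ∈ Sstar, |βstar k|) - (∑ k ∈ Sstar, |βhat k|) ≤ a := by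
      rw [ha, ← Finset.sum_sub_distrib]
      refine Finset.sum_le_sum fun k _ => ?_
      calc |βstar k| - |βhat k| ≤ |βstar k - βhat k| := abs_sub_abs_le_abs_sub _ _
        _ = |u k| := by rw [hu]; simp [abs_sub_comm]
    linarith [hs1, hs2]
  -- basic inequality
  have key := hβhat βstar
  rw [hQ] at key
  have hkey : (2 * n : ℝ)⁻¹ * (G - 2 * T) ≤ lam * (a - b) := by
    have : lam * (∑ k, |βstar k|) - lam * (∑ k, |βhat k|) ≤ lam * (a - b) := by
      rw [← mul_sub]; exact mul_le_mul_of_nonneg_left hnorm hlam.le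
    nlinarith [key]
  rcases Nat.eq_zero_or_pos n with hn | hn
  · subst hn
    have hG0' : G = 0 := by simp [hG]
    have hT0 : T = 0 := by simp [hT]
    have h0 : (0:ℝ) ≤ lam * (a - b) := by
      have := hkey; rw [hG0', hT0] at this; simpa using this
    have hab : b ≤ a := by nlinarith
    refine ⟨by linarith, ?_⟩
    rw [hG0']; norm_num
  · have hnpos : (0 : ℝ) < n := Nat.cast_pos.mpr hn
    have h2n : (0 : ℝ) < 2 * n := by linarith
    have hmul : G - 2 * T ≤ 2 * n * (lam * (a - b)) := by
      have := mul_le_mul_of_nonneg_left hkey h2n.le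
      rwa [← mul_assoc, mul_inv_cancel₀ h2n.ne', one_mul] at this
    have hGb : G ≤ 3 * n * lam * a - n * lam * b := by nlinarith
    have hnl : (0 : ℝ) < n * lam := mul_pos hnpos hlam
    constructor
    · nlinarith
    · nlinarith
end

section
/- (Deterministic LASSO support result.) Suppose the active submatrix H_{c,S*} has rank ℓ* and there exists κ ∈ (0,1] such that (i) max_{k∈S̄*} ‖θ̂ₙ⁽ᵏ⁾‖₁ ≤ 1−κ, where θ̂ₙ⁽ᵏ⁾ = (H_{c,S*}ᵀH_{c,S*})⁻¹H_{c,S*}ᵀH_{c,k} is the OLS regression of column H_{c,k} on H_{c,S*}, and (ii) max_{k∈S̄*} |(H_{c,k} − H_{c,S*}θ̂ₙ⁽ᵏ⁾)ᵀ ε_c⁽ⁿ⁾| ≤ κ·λ·n. Then the LASSO minimizer β̂ₙˡᵃˢˢᵒ(f) is unique, its support is contained in S*, and max_{k∈S*} |β̂ⁿˡᵃˢˢᵒ_{n,k}(f) − β*_k(f)| ≤ max_{k∈S*} |β̂*_{n,k} − β*_k(f)| + n·λ·‖(H_{c,S*}ᵀH_{c,S*})⁻¹‖_∞, where β̂ₙ*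 = (H_{c,S*}ᵀH_{c,S*})⁻¹H_{c,S*}ᵀf_c⁽ⁿ⁾ is the OLS oracle estimate on the active columns. -/
open scoped BigOperators Matrix

/-!
A LASSO minimizer `β` satisfies the KKT bound `|H_jᵀ (y - Hβ)| ≤ λn` for every column `j`.

For the support, move the inactive coefficients of `β` onto `S` along the directions
`e_k - θ⁽ᵏ⁾`. By (i) this lowers the `ℓ₁` norm by at least `κ T`, where `T = ‖β_{S̄}‖₁`, and it
changes the fit by `W = Σ_{k ∉ S} β_k (H_k - H_S θ⁽ᵏ⁾)`, which is orthogonal to the columns of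
`H_S`. Comparing objectives and bounding `⟨W, ε⟩ ≤ nκλT` by (ii) gives
`‖W‖² + 2nκλT ≤ 2⟨W, ε⟩ ≤ 2nκλT`, so `W = 0`, and then `T = 0`.

All minimizers have the same fitted values (the quadratic term is strictly convex in `Hβ`), and
`H_S` is injective, so the minimizer is unique. The error bound follows from
`β̂_S = β̂* - (H_Sᵀ H_S)⁻¹ H_Sᵀ (y - Hβ̂)` together with the KKT bound.
-/

open Matrix Finset

theorem le_of_forall_pos_le_add_mul {K : Type*} [Field K] [LinearOrder K] [IsStrictOrderedRing K]
    {a b c : K} (h : ∀ t, 0 < t → a ≤ b + t * c) : a ≤ b := by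
  refine le_of_forall_pos_le_add fun ε hε => ?_
  obtain hc | hc := le_or_gt c 0
  · linarith [h 1 one_pos]
  · simpa [div_mul_cancel₀ _ hc.ne'] using h (ε / c) (div_pos hε hc)

theorem Matrix.mulVec_dotProduct {R m k : Type*} [CommSemiring R] [Fintype m] [Fintype k]
    (A : Matrix m k R) (u : k → R) (r : m → R) : (A *ᵥ u) ⬝ᵥ r = u ⬝ᵥ (Aᵀ *ᵥ r) := by
  rw [dotProduct_comm, dotProduct_mulVec, ← mulVec_transpose, dotProduct_comm]

variable {n : ℕ} {ι : Type*}

section Lasso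

variable [Fintype ι]

noncomputable def lassoObjective (H : Matrix (Fin n) ι ℝ) (y : Fin n → ℝ) (lam : ℝ)
    (β : ι → ℝ) : ℝ :=
  (2 * n : ℝ)⁻¹ * (∑ i, (y i - (H *ᵥ β) i) ^ 2) + lam * ∑ k, |β k|

variable {H : Matrix (Fin n) ι ℝ} {y : Fin n → ℝ} {lam : ℝ} {β : ι → ℝ}

theorem lassoObjective_eq_dotProduct (β : ι → ℝ) :
    lassoObjective H y lam β
      = (2 * n : ℝ)⁻¹ * ((y - H *ᵥ β) ⬝ᵥ (y - H *ᵥ β)) + lam * ∑ k, |β k| := by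
  simp [lassoObjective, dotProduct, sq]

theorem mulVec_dotProduct_residual_le (hlam : 0 ≤ lam)
    (hβ : ∀ γ, lassoObjective H y lam β ≤ lassoObjective H y lam γ) (v : ι → ℝ) :
    (H *ᵥ v) ⬝ᵥ (y - H *ᵥ β) ≤ lam * n * ∑ k, |v k| := by
  rcases n.eq_zero_or_pos with rfl | hn
  · simp [dotProduct]
  refine le_of_forall_pos_le_add_mul (c := (H *ᵥ v) ⬝ᵥ (H *ᵥ v) / 2) fun t ht => ?_
  have hl1 : ∑ k, |(β + t • v) k| ≤ ∑ k, |β k| + t * ∑ k, |v k| := by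
    rw [mul_sum, ← sum_add_distrib]
    refine sum_le_sum fun k _ => ?_
    simpa [abs_mul, abs_of_pos ht] using abs_add_le (β k) (t * v k)
  have hmin := hβ (β + t • v)
  have hres : y - H *ᵥ (β + t • v) = (y - H *ᵥ β) - t • H *ᵥ v := by
    rw [mulVec_add, mulVec_smul]; abel
  rw [lassoObjective_eq_dotProduct, lassoObjective_eq_dotProduct, hres] at hmin
  generalize y - H *ᵥ β = r at hmin ⊢
  simp only [dotProduct_sub, sub_dotProduct, dotProduct_smul, smul_dotProduct, smul_eq_mul,
    dotProduct_comm r] at hmin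
  have hq : 2 * t * ((H *ᵥ v) ⬝ᵥ r) - t ^ 2 * ((H *ᵥ v) ⬝ᵥ (H *ᵥ v))
      ≤ 2 * n * (lam * t * ∑ k, |v k|) := by
    rw [← inv_mul_le_iff₀ (by positivity)]
    nlinarith [mul_le_mul_of_nonneg_left hl1 hlam]
  nlinarith

theorem abs_transpose_mulVec_residual_le [DecidableEq ι] (hlam : 0 ≤ lam)
    (hβ : ∀ γ, lassoObjective H y lam β ≤ lassoObjective H y lam γ) (j : ι) :
    |(Hᵀ *ᵥ (y - H *ᵥ β)) j| ≤ lam * n := by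
  have key : ∀ s : ℝ, |s| = 1 → s * (Hᵀ *ᵥ (y - H *ᵥ β)) j ≤ lam * n := fun s hs => by
    have hsingle : ∑ k, |Pi.single j s k| = 1 := by
      rw [sum_eq_single j (fun k _ hk => by simp [hk]) (by simp), Pi.single_eq_same, hs]
    have := mulVec_dotProduct_residual_le hlam hβ (Pi.single j s)
    rwa [mulVec_dotProduct, single_dotProduct, hsingle, mul_one] at this
  exact abs_le.2 ⟨by linarith [key (-1) (by simp)], by linarith [key 1 (by simp)]⟩

theorem mulVec_eq_of_lassoObjective_le (hlam : 0 ≤ lam)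
    (hβ : ∀ γ, lassoObjective H y lam β ≤ lassoObjective H y lam γ) {β' : ι → ℝ}
    (hβ' : lassoObjective H y lam β' ≤ lassoObjective H y lam β) : H *ᵥ β' = H *ᵥ β := by
  rcases n.eq_zero_or_pos with rfl | hn
  · exact Subsingleton.elim _ _
  set r := y - H *ᵥ β
  set r' := y - H *ᵥ β'
  have hres : y - H *ᵥ ((2 : ℝ)⁻¹ • (β + β')) = (2 : ℝ)⁻¹ • (r + r') := by
    rw [mulVec_smul, mulVec_add]; module
  have hl1 : ∑ k, |((2 : ℝ)⁻¹ • (β + β')) k| ≤ (∑ k, |β k| + ∑ k, |β' k|) / 2 := by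
    rw [← sum_add_distrib, sum_div]
    refine sum_le_sum fun k _ => ?_
    simpa [abs_mul, add_div, div_eq_inv_mul] using
      mul_le_mul_of_nonneg_left (abs_add_le (β k) (β' k)) (by norm_num : (0 : ℝ) ≤ 2⁻¹)
  have hpar : ((2 : ℝ)⁻¹ • (r + r')) ⬝ᵥ ((2 : ℝ)⁻¹ • (r + r'))
      = (r ⬝ᵥ r + r' ⬝ᵥ r') / 2 - (r - r') ⬝ᵥ (r - r') / 4 := by
    simp only [dotProduct_add, add_dotProduct, dotProduct_sub, sub_dotProduct, dotProduct_smul,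
      smul_dotProduct, smul_eq_mul, dotProduct_comm r' r]
    ring
  have hmid := hβ ((2 : ℝ)⁻¹ • (β + β'))
  rw [lassoObjective_eq_dotProduct, lassoObjective_eq_dotProduct, hres, hpar] at hmid
  rw [lassoObjective_eq_dotProduct, lassoObjective_eq_dotProduct] at hβ'
  have hzero : (r - r') ⬝ᵥ (r - r') ≤ 0 := by
    have : (2 * n : ℝ)⁻¹ * ((r - r') ⬝ᵥ (r - r')) ≤ 0 := by
      nlinarith [mul_le_mul_of_nonneg_left hl1 hlam]
    exact nonpos_of_mul_nonpos_right this (by positivity)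
  have := sub_eq_zero.1 (dotProduct_self_eq_zero.1
    (le_antisymm hzero (by simpa using dotProduct_star_self_nonneg (r - r'))))
  simpa [r, r'] using this.symm

end Lasso

section Support

variable [Fintype ι] [DecidableEq ι] {S : Finset ι} {φ : ι → ι → ℝ}

theorem sum_compl_smul_apply_of_notMem
    (hφ_compl : ∀ k ∉ S, ∀ j ∉ S, φ k j = (Pi.single k 1 : ι → ℝ) j)
    (β : ι → ℝ) {j : ι} (hj : j ∉ S) : (∑ k ∈ Sᶜ, β k • φ k) j = β j := by
  rw [Finset.sum_apply, sum_congr rfl fun k hk => by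
    rw [Pi.smul_apply, hφ_compl k (mem_compl.1 hk) j hj, smul_eq_mul, Pi.single_apply]]
  simp [hj]

theorem sum_abs_sub_sum_compl_smul_le {κ : ℝ}
    (hφ_compl : ∀ k ∉ S, ∀ j ∉ S, φ k j = (Pi.single k 1 : ι → ℝ) j)
    (hφ_l1 : ∀ k ∉ S, ∑ j ∈ S, |φ k j| ≤ 1 - κ) (β : ι → ℝ) :
    ∑ j, |(β - ∑ k ∈ Sᶜ, β k • φ k) j| ≤ ∑ j, |β j| - κ * ∑ k ∈ Sᶜ, |β k| := by
  rw [← sum_add_sum_compl S, ← sum_add_sum_compl S (fun j => |β j|)]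
  have hcompl : ∑ j ∈ Sᶜ, |(β - ∑ k ∈ Sᶜ, β k • φ k) j| = 0 := sum_eq_zero fun j hj => by
    rw [Pi.sub_apply, sum_compl_smul_apply_of_notMem hφ_compl β (mem_compl.1 hj), sub_self,
      abs_zero]
  have hS : ∑ j ∈ S, |(β - ∑ k ∈ Sᶜ, β k • φ k) j|
      ≤ ∑ j ∈ S, |β j| + ∑ k ∈ Sᶜ, |β k| * ∑ j ∈ S, |φ k j| :=
    calc ∑ j ∈ S, |(β - ∑ k ∈ Sᶜ, β k • φ k) j|
        ≤ ∑ j ∈ S, (|β j| + ∑ k ∈ Sᶜ, |β k| * |φ k j|) := sum_le_sum fun j _ => by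
          rw [Pi.sub_apply, Finset.sum_apply]
          refine (abs_sub _ _).trans (add_le_add_right ((abs_sum_le_sum_abs _ _).trans_eq ?_) _)
          simp [abs_mul]
      _ = _ := by rw [sum_add_distrib, sum_comm]; simp [mul_sum]
  have hcoef : ∑ k ∈ Sᶜ, |β k| * ∑ j ∈ S, |φ k j| ≤ (1 - κ) * ∑ k ∈ Sᶜ, |β k| := by
    rw [mul_sum]
    exact sum_le_sum fun k hk => by
      nlinarith [hφ_l1 k (mem_compl.1 hk), abs_nonneg (β k)]
  linarith

theorem residual_sub_dotProduct_self {H : Matrix (Fin n) ι ℝ} {y W : Fin n → ℝ}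
    {γ βstar : ι → ℝ} (hW : ∀ j ∈ S, (Hᵀ *ᵥ W) j = 0) (hγ : ∀ j ∉ S, γ j = βstar j) :
    (y - H *ᵥ γ - W) ⬝ᵥ (y - H *ᵥ γ - W)
      = (y - H *ᵥ γ) ⬝ᵥ (y - H *ᵥ γ) - 2 * (W ⬝ᵥ (y - H *ᵥ βstar)) + W ⬝ᵥ W := by
  have hcross : W ⬝ᵥ (y - H *ᵥ γ) = W ⬝ᵥ (y - H *ᵥ βstar) := by
    rw [← sub_eq_zero, ← dotProduct_sub, sub_sub_sub_cancel_left, ← mulVec_sub, dotProduct_comm,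
      mulVec_dotProduct]
    refine sum_eq_zero fun j _ => ?_
    by_cases hj : j ∈ S
    · rw [hW j hj, mul_zero]
    · rw [Pi.sub_apply, hγ j hj, sub_self, zero_mul]
  generalize y - H *ᵥ γ = u at hcross ⊢
  rw [sub_dotProduct, dotProduct_sub, dotProduct_sub, dotProduct_comm u W, hcross]
  ring

theorem lasso_support_subset {H : Matrix (Fin n) ι ℝ} {y : Fin n → ℝ} {lam κ : ℝ}
    (hlam : 0 < lam) (hκ : 0 < κ) {βstar : ι → ℝ} (hβstar : ∀ k ∉ S, βstar k = 0)
    (hφ_compl : ∀ k ∉ S, ∀ j ∉ S, φ k j = (Pi.single k 1 : ι → ℝ) j)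
    (hφ_l1 : ∀ k ∉ S, ∑ j ∈ S, |φ k j| ≤ 1 - κ)
    (hφ_orth : ∀ k ∉ S, ∀ j ∈ S, (Hᵀ *ᵥ (H *ᵥ φ k)) j = 0)
    (hφ_noise : ∀ k ∉ S, |(H *ᵥ φ k) ⬝ᵥ (y - H *ᵥ βstar)| ≤ κ * lam * n)
    {β : ι → ℝ} (hβ : ∀ γ, lassoObjective H y lam β ≤ lassoObjective H y lam γ) :
    ∀ k ∉ S, β k = 0 := by
  set d := ∑ k ∈ Sᶜ, β k • φ k
  set T := ∑ k ∈ Sᶜ, |β k|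
  set ε := y - H *ᵥ βstar
  set W := H *ᵥ d
  have hW_orth : ∀ j ∈ S, (Hᵀ *ᵥ W) j = 0 := fun j hj => by
    simp only [W, d, mulVec_sum, mulVec_smul, Finset.sum_apply, Pi.smul_apply, smul_eq_mul]
    exact sum_eq_zero fun k hk => by rw [hφ_orth k (mem_compl.1 hk) j hj, mul_zero]
  have hW_noise : W ⬝ᵥ ε ≤ κ * lam * n * T := by
    simp only [W, d, T, mulVec_sum, mulVec_smul, sum_dotProduct, smul_dotProduct, smul_eq_mul,
      mul_sum]
    refine sum_le_sum fun k hk => ?_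
    calc β k * ((H *ᵥ φ k) ⬝ᵥ ε) ≤ |β k| * |(H *ᵥ φ k) ⬝ᵥ ε| := by
          rw [← abs_mul]; exact le_abs_self _
      _ ≤ |β k| * (κ * lam * n) :=
          mul_le_mul_of_nonneg_left (hφ_noise k (mem_compl.1 hk)) (abs_nonneg _)
      _ = κ * lam * n * |β k| := mul_comm _ _
  have key : (2 * n : ℝ)⁻¹ * (W ⬝ᵥ W) + lam * κ * T ≤ (2 * n : ℝ)⁻¹ * (2 * (W ⬝ᵥ ε)) := by
    have hmin := hβ (β - d)
    have hres : y - H *ᵥ β = y - H *ᵥ (β - d) - W := by simp only [W, mulVec_sub]; abel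
    have hexp := residual_sub_dotProduct_self (y := y) (γ := β - d) (βstar := βstar) hW_orth
      fun j hj => by
        have hdj : d j = β j := sum_compl_smul_apply_of_notMem hφ_compl β hj
        rw [Pi.sub_apply, hdj, sub_self, hβstar j hj]
    rw [lassoObjective_eq_dotProduct, lassoObjective_eq_dotProduct, hres, hexp] at hmin
    nlinarith [mul_le_mul_of_nonneg_left (sum_abs_sub_sum_compl_smul_le hφ_compl hφ_l1 β) hlam.le]
  have hW : W = 0 := by
    rcases n.eq_zero_or_pos with rfl | hn
    · exact Subsingleton.elim _ _
    have hX : (2 * n : ℝ)⁻¹ * (2 * (W ⬝ᵥ ε)) ≤ lam * κ * T := by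
      rw [inv_mul_le_iff₀ (by positivity)]
      linarith
    have hWW : W ⬝ᵥ W ≤ 0 :=
      nonpos_of_mul_nonpos_right (by linarith) (by positivity : (0 : ℝ) < (2 * n : ℝ)⁻¹)
    exact dotProduct_self_eq_zero.1 (le_antisymm hWW (by simpa using dotProduct_star_self_nonneg W))
  have hT : T = 0 := by
    rw [hW, zero_dotProduct, zero_dotProduct, mul_zero, mul_zero, zero_add] at key
    have hT0 : 0 ≤ T := sum_nonneg fun k _ => abs_nonneg _
    nlinarith [mul_pos hlam hκ]
  intro k hk
  exact abs_eq_zero.1 ((sum_eq_zero_iff_of_nonneg fun _ _ => abs_nonneg _).1 hT k (mem_compl.2 hk))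

end Support

section LeastSquares

variable {m p : Type*} [Fintype m] [Fintype p] [DecidableEq p] {A : Matrix m p ℝ}

noncomputable def olsCoeff (A : Matrix m p ℝ) (z : m → ℝ) : p → ℝ :=
  (Aᵀ * A)⁻¹ *ᵥ (Aᵀ *ᵥ z)

theorem isUnit_det_transpose_mul_self_of_rank_eq (h : A.rank = Fintype.card p) :
    IsUnit (Aᵀ * A).det := by
  rw [← isUnit_iff_isUnit_det, ← mulVec_surjective_iff_isUnit]
  have hrange : LinearMap.range (Aᵀ * A).mulVecLin = ⊤ := Submodule.eq_top_of_finrank_eq <| by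
    rw [← rank, rank_transpose_mul_self, h, Module.finrank_fintype_fun_eq_card]
  exact LinearMap.range_eq_top.1 hrange

theorem transpose_mulVec_sub_mulVec_olsCoeff (hA : IsUnit (Aᵀ * A).det) (z : m → ℝ) :
    Aᵀ *ᵥ (z - A *ᵥ olsCoeff A z) = 0 := by
  rw [olsCoeff, mulVec_sub, mulVec_mulVec, mulVec_mulVec, mul_nonsing_inv _ hA, one_mulVec,
    sub_self]

theorem olsCoeff_mulVec (hA : IsUnit (Aᵀ * A).det) (v : p → ℝ) : olsCoeff A (A *ᵥ v) = v := by
  rw [olsCoeff, mulVec_mulVec, mulVec_mulVec, Matrix.mul_assoc, nonsing_inv_mul _ hA, one_mulVec]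

theorem olsCoeff_sub (z z' : m → ℝ) : olsCoeff A (z - z') = olsCoeff A z - olsCoeff A z' := by
  rw [olsCoeff, olsCoeff, olsCoeff, mulVec_sub, mulVec_sub]

theorem mulVec_injective_of_isUnit_det_transpose_mul_self (hA : IsUnit (Aᵀ * A).det) :
    Function.Injective (A *ᵥ ·) := fun u v huv => by
  rw [← olsCoeff_mulVec hA u, ← olsCoeff_mulVec hA v]
  exact congrArg (olsCoeff A) huv

end LeastSquares

theorem abs_mulVec_apply_le_mul_iSup {m p : Type*} [Finite m] [Fintype p] (M : Matrix m p ℝ)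
    {v : p → ℝ} {c : ℝ} (hc : 0 ≤ c) (hv : ∀ j, |v j| ≤ c) (i : m) :
    |(M *ᵥ v) i| ≤ c * ⨆ i, ∑ j, |M i j| :=
  calc |(M *ᵥ v) i| ≤ ∑ j, |M i j| * |v j| :=
        (abs_sum_le_sum_abs _ _).trans_eq (sum_congr rfl fun j _ => abs_mul _ _)
    _ ≤ ∑ j, |M i j| * c := sum_le_sum fun j _ => mul_le_mul_of_nonneg_left (hv j) (abs_nonneg _)
    _ ≤ c * ⨆ i, ∑ j, |M i j| := by
        rw [← sum_mul, mul_comm]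
        exact mul_le_mul_of_nonneg_left
          (le_ciSup (f := fun i => ∑ j, |M i j|) (Finite.bddAbove_range _) i) hc

section ActiveColumns

variable {m : Type*} {H : Matrix m ι ℝ} {S : Finset ι}

def restrictCols (H : Matrix m ι ℝ) (S : Finset ι) : Matrix m S ℝ :=
  H.submatrix id Subtype.val

def extendByZero [DecidableEq ι] (v : S → ℝ) : ι → ℝ :=
  fun j => if h : j ∈ S then v ⟨j, h⟩ else 0

theorem mulVec_eq_restrictCols_mulVec [Fintype ι] {β : ι → ℝ} (hβ : ∀ k ∉ S, β k = 0) :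
    H *ᵥ β = restrictCols H S *ᵥ fun k => β k := by
  funext i
  simp only [mulVec, dotProduct, restrictCols, submatrix_apply, id]
  rw [sum_coe_sort S fun k => H i k * β k]
  exact (sum_subset (subset_univ S) fun k _ hk => by rw [hβ k hk, mul_zero]).symm

theorem mulVec_extendByZero [Fintype ι] [DecidableEq ι] (v : S → ℝ) :
    H *ᵥ extendByZero v = restrictCols H S *ᵥ v := by
  rw [mulVec_eq_restrictCols_mulVec (β := extendByZero v) fun k hk => dif_neg hk]
  congr
  funext k
  exact dif_pos k.2

variable [Fintype m] [Fintype ι] [DecidableEq ι]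

theorem eq_of_mulVec_eq_of_support (hB : IsUnit ((restrictCols H S)ᵀ * restrictCols H S).det)
    {β β' : ι → ℝ} (hβ : ∀ k ∉ S, β k = 0) (hβ' : ∀ k ∉ S, β' k = 0)
    (h : H *ᵥ β = H *ᵥ β') : β = β' := by
  have hA : restrictCols H S *ᵥ (fun k : S => β k) = restrictCols H S *ᵥ (fun k : S => β' k) := by
    rw [← mulVec_eq_restrictCols_mulVec hβ, ← mulVec_eq_restrictCols_mulVec hβ', h]
  have hS := mulVec_injective_of_isUnit_det_transpose_mul_self hB hA
  funext k
  by_cases hk : k ∈ S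
  · exact congrFun hS ⟨k, hk⟩
  · rw [hβ k hk, hβ' k hk]

theorem restrict_eq_olsCoeff_sub (hB : IsUnit ((restrictCols H S)ᵀ * restrictCols H S).det)
    {β : ι → ℝ} (hβ : ∀ k ∉ S, β k = 0) (y : m → ℝ) :
    (fun k : S => β k)
      = olsCoeff (restrictCols H S) y - olsCoeff (restrictCols H S) (y - H *ᵥ β) := by
  rw [← olsCoeff_sub, sub_sub_cancel, mulVec_eq_restrictCols_mulVec hβ, olsCoeff_mulVec hB]

end ActiveColumns

theorem lasso_support_subset_of_olsCoeff [Fintype ι] [DecidableEq ι] {H : Matrix (Fin n) ι ℝ}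
    {y : Fin n → ℝ} {lam κ : ℝ} (hlam : 0 < lam) (hκ : 0 < κ) {S : Finset ι} {βstar : ι → ℝ}
    (hβstar : ∀ k ∉ S, βstar k = 0)
    (hB : IsUnit ((restrictCols H S)ᵀ * restrictCols H S).det)
    (hθ_l1 : ∀ k ∉ S, ∑ j, |olsCoeff (restrictCols H S) (fun i => H i k) j| ≤ 1 - κ)
    (hθ_noise : ∀ k ∉ S,
      |(fun i => H i k - (restrictCols H S *ᵥ olsCoeff (restrictCols H S) (fun i => H i k)) i)
        ⬝ᵥ (y - H *ᵥ βstar)| ≤ κ * lam * n)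
    {β : ι → ℝ} (hβ : ∀ γ, lassoObjective H y lam β ≤ lassoObjective H y lam γ) :
    ∀ k ∉ S, β k = 0 := by
  have hHφ : ∀ k (v : S → ℝ), H *ᵥ (Pi.single k 1 - extendByZero v)
      = fun i => H i k - (restrictCols H S *ᵥ v) i := fun k v => by
    rw [mulVec_sub, mulVec_single_one, mulVec_extendByZero]; rfl
  refine lasso_support_subset
    (φ := fun k => Pi.single k 1 - extendByZero (olsCoeff (restrictCols H S) (fun i => H i k)))
    hlam hκ hβstar ?_ ?_ ?_ ?_ hβ
  · intro k _ j hj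
    simp [extendByZero, hj]
  · intro k hk
    rw [← sum_coe_sort]
    convert hθ_l1 k hk using 2 with j
    simp [extendByZero, ne_of_mem_of_not_mem j.2 hk]
  · intro k _ j hj
    rw [hHφ]
    exact congrFun (transpose_mulVec_sub_mulVec_olsCoeff hB _) ⟨j, hj⟩
  · intro k hk
    rw [hHφ]
    exact hθ_noise k hk

theorem lasso_deterministic_support_general
    (n m : ℕ) (lam : ℝ) (hlam : 0 < lam)
    (Hc : Matrix (Fin n) (Fin m) ℝ) (fc : Fin n → ℝ)
    (βstar : Fin m → ℝ)
    (Sstar : Finset (Fin m)) (hSstar : ∀ k, k ∈ Sstar ↔ βstar k ≠ 0)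
    (κ : ℝ) (hκ : κ ∈ Set.Ioc (0 : ℝ) 1)
    (βhat : Fin m → ℝ)
    (hβhat : ∀ β : Fin m → ℝ,
      (2 * n : ℝ)⁻¹ * (∑ i, (fc i - Hc.mulVec βhat i) ^ 2) + lam * ∑ k, |βhat k|
        ≤ (2 * n : ℝ)⁻¹ * (∑ i, (fc i - Hc.mulVec β i) ^ 2) + lam * ∑ k, |β k|) :
    -- the active design matrix, the residual vector, the inactive-on-active OLS
    -- regression coefficients and the OLS oracle estimate
    let A : Matrix (Fin n) ↥Sstar ℝ := Hc.submatrix id (fun k : ↥Sstar => k.val)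
    let εc : Fin n → ℝ := fun i => fc i - Hc.mulVec βstar i
    let θ : Fin m → ↥Sstar → ℝ :=
      fun k => (A.transpose * A)⁻¹.mulVec (A.transpose.mulVec (fun i => Hc i k))
    let βols : ↥Sstar → ℝ := (A.transpose * A)⁻¹.mulVec (A.transpose.mulVec fc)
    -- hypotheses: full column rank and conditions (i), (ii)
    A.rank = Sstar.card →
    (∀ k ∉ Sstar, (∑ j : ↥Sstar, |θ k j|) ≤ 1 - κ) →
    (∀ k ∉ Sstar,
      |(fun i => Hc i k - A.mulVec (θ k) i) ⬝ᵥ εc| ≤ κ * lam * n) →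
    -- conclusions: uniqueness of the LASSO minimizer, support inclusion and the
    -- coefficient error bound
    ((∀ β : Fin m → ℝ,
        (2 * n : ℝ)⁻¹ * (∑ i, (fc i - Hc.mulVec β i) ^ 2) + lam * ∑ k, |β k|
          ≤ (2 * n : ℝ)⁻¹ * (∑ i, (fc i - Hc.mulVec βhat i) ^ 2)
            + lam * ∑ k, |βhat k| →
        β = βhat)
      ∧ (∀ k ∉ Sstar, βhat k = 0)
      ∧ (∀ k : ↥Sstar, |βhat k.val - βstar k.val|
          ≤ (⨆ j : ↥Sstar, |βols j - βstar j.val|)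
            + n * lam * ⨆ i : ↥Sstar, ∑ j : ↥Sstar, |(A.transpose * A)⁻¹ i j|)) := by
  intro A εc θ βols hrank hθ_l1 hθ_noise
  have hB : IsUnit (Aᵀ * A).det :=
    isUnit_det_transpose_mul_self_of_rank_eq (by rw [hrank, Fintype.card_coe])
  have hβstar : ∀ k ∉ Sstar, βstar k = 0 := fun k hk => not_not.1 (mt (hSstar k).2 hk)
  have hsupport : ∀ β, (∀ γ, lassoObjective Hc fc lam β ≤ lassoObjective Hc fc lam γ) →
      ∀ k ∉ Sstar, β k = 0 := fun β hβ =>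
    lasso_support_subset_of_olsCoeff hlam hκ.1 hβstar hB hθ_l1 hθ_noise hβ
  have hβhat_supp := hsupport βhat hβhat
  refine ⟨fun β hβ => ?_, hβhat_supp, fun k => ?_⟩
  · exact eq_of_mulVec_eq_of_support hB (hsupport β fun γ => hβ.trans (hβhat γ)) hβhat_supp
      (mulVec_eq_of_lassoObjective_le hlam.le hβhat hβ)
  · have hrepr : βhat k = βols k - ((Aᵀ * A)⁻¹ *ᵥ (Aᵀ *ᵥ (fc - Hc *ᵥ βhat))) k :=
      congrFun (restrict_eq_olsCoeff_sub hB hβhat_supp fc) k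
    have hkkt : ∀ j : Sstar, |(Aᵀ *ᵥ (fc - Hc *ᵥ βhat)) j| ≤ lam * n := fun j =>
      abs_transpose_mulVec_residual_le hlam.le hβhat j
    calc |βhat k - βstar k|
        ≤ |βols k - βstar k| + |((Aᵀ * A)⁻¹ *ᵥ (Aᵀ *ᵥ (fc - Hc *ᵥ βhat))) k| := by
          rw [hrepr, sub_right_comm]
          exact abs_sub _ _
      _ ≤ _ := add_le_add (le_ciSup (f := fun j : Sstar => |βols j - βstar j|)
            (Finite.bddAbove_range _) k)
          ((abs_mulVec_apply_le_mul_iSup _ (by positivity) hkkt k).trans_eq (by ring))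

/-- Deterministic LASSO support result (Lemma 10 of the paper).  If the
active design `H_{c,S*}` has full column rank `ℓ*` and, for some `κ ∈ (0,1]`, the
regressions `θ̂⁽ᵏ⁾` of the inactive columns on the active ones satisfy
`max_{k∈S̄*}‖θ̂⁽ᵏ⁾‖₁ ≤ 1−κ` and
`max_{k∈S̄*}|(H_{c,k} − H_{c,S*}θ̂⁽ᵏ⁾)ᵀ ε_c| ≤ κλn`, then the LASSO minimizer is
unique, its support is contained in `S*`, and
`max_{k∈S*}|β̂_k − β*_k| ≤ max_{k∈S*}|β̂*_k − β*_k| + nλ‖(H_{c,S*}ᵀH_{c,S*})⁻¹‖_∞`. -/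
theorem lasso_deterministic_support
    (n m : ℕ) (lam : ℝ) (hlam : 0 < lam)
    (Hc : Matrix (Fin n) (Fin m) ℝ) (fc : Fin n → ℝ)
    (βstar : Fin m → ℝ)
    (Sstar : Finset (Fin m)) (hSstar : ∀ k, k ∈ Sstar ↔ βstar k ≠ 0)
    (hSne : Sstar.Nonempty)
    (κ : ℝ) (hκ : κ ∈ Set.Ioc (0 : ℝ) 1)
    (βhat : Fin m → ℝ)
    (hβhat : ∀ β : Fin m → ℝ,
      (2 * n : ℝ)⁻¹ * (∑ i, (fc i - Hc.mulVec βhat i) ^ 2) + lam * ∑ k, |βhat k|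
        ≤ (2 * n : ℝ)⁻¹ * (∑ i, (fc i - Hc.mulVec β i) ^ 2) + lam * ∑ k, |β k|) :
    -- the active design matrix, the residual vector, the inactive-on-active OLS
    -- regression coefficients and the OLS oracle estimate
    let A : Matrix (Fin n) ↥Sstar ℝ := Hc.submatrix id (fun k : ↥Sstar => k.val)
    let εc : Fin n → ℝ := fun i => fc i - Hc.mulVec βstar i
    let θ : Fin m → ↥Sstar → ℝ :=
      fun k => (A.transpose * A)⁻¹.mulVec (A.transpose.mulVec (fun i => Hc i k))
    let βols : ↥Sstar → ℝ := (A.transpose * A)⁻¹.mulVec (A.transpose.mulVec fc)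
    -- hypotheses: full column rank and conditions (i), (ii)
    A.rank = Sstar.card →
    (∀ k ∉ Sstar, (∑ j : ↥Sstar, |θ k j|) ≤ 1 - κ) →
    (∀ k ∉ Sstar,
      |(fun i => Hc i k - A.mulVec (θ k) i) ⬝ᵥ εc| ≤ κ * lam * n) →
    -- conclusions: uniqueness of the LASSO minimizer, support inclusion and the
    -- coefficient error bound
    ((∀ β : Fin m → ℝ,
        (2 * n : ℝ)⁻¹ * (∑ i, (fc i - Hc.mulVec β i) ^ 2) + lam * ∑ k, |β k|
          ≤ (2 * n : ℝ)⁻¹ * (∑ i, (fc i - Hc.mulVec βhat i) ^ 2)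
            + lam * ∑ k, |βhat k| →
        β = βhat)
      ∧ (∀ k ∉ Sstar, βhat k = 0)
      ∧ (∀ k : ↥Sstar, |βhat k.val - βstar k.val|
          ≤ (⨆ j : ↥Sstar, |βols j - βstar j.val|)
            + n * lam * ⨆ i : ↥Sstar, ∑ j : ↥Sstar, |(A.transpose * A)⁻¹ i j|)) :=
  lasso_deterministic_support_general n m lam hlam Hc fc βstar Sstar hSstar κ hκ βhat hβhat
end

section
/- (Deterministic bound on the OLS coefficient error.) With ℏ = G^{-1/2}h the ortho-normalized control variates, η* = G^{1/2}β*(f) and η̂ = G^{1/2}β̂ₙᵒˡˢ(f): if λ_min(Pₙ(ℏℏᵀ)) > ‖Pₙ(ℏ)‖₂², then ‖η̂ − η*‖₂ ≤ (‖Pₙ(ℏε)‖₂ + ‖Pₙ(ℏ)‖₂·|Pₙ(ε)|) / (λ_min(Pₙ(ℏℏᵀ)) − ‖Pₙ(ℏ)‖₂²), and consequently |α̂ₙᵒˡˢ(f) − P(f)| ≤ |Pₙ(ε)| + [(‖Pₙ(ℏε)‖₂ + ‖Pₙ(ℏ)‖₂·|Pₙ(ε)|) / (λ_min(Pₙ(ℏℏᵀ))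 − ‖Pₙ(ℏ)‖₂²)]·‖Pₙ(ℏ)‖₂. -/
open MeasureTheory
open scoped BigOperators Matrix

noncomputable def lamMin {p : ℕ} (A : Matrix (Fin p) (Fin p) ℝ) : ℝ :=
  ⨅ u : {u : Fin p → ℝ // ∑ i, u i ^ 2 = 1}, (u : Fin p → ℝ) ⬝ᵥ A.mulVec u

/-!
Along the line `t ↦ β* + t (β̂ − β*)` the OLS objective is a quadratic in `t` minimised at
`t = 1`, so the empirical variance of `D = (β̂ − β*)ᵀh` equals its empirical covariance with `ε`.
Since `Gs` is symmetric, `D = δᵀℏ` with `δ = Gs (β̂ − β*)`, and that variance is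
`δᵀ Pₙ(ℏℏᵀ) δ − (δᵀPₙℏ)² ≥ (λ_min(Pₙ(ℏℏᵀ)) − ‖Pₙℏ‖²) ‖δ‖²`, while Cauchy–Schwarz bounds the
covariance `δᵀPₙ(ℏε) − (δᵀPₙℏ) Pₙε` by `‖δ‖ (‖Pₙ(ℏε)‖ + ‖Pₙℏ‖ |Pₙε|)`. The bound on `α̂ − P(f)`
follows from `α̂ − P(f) = Pₙε − δᵀPₙℏ`.
-/

open Finset Matrix

theorem lamMin_mul_sum_sq_le {p : ℕ} {A : Matrix (Fin p) (Fin p) ℝ}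
    (hA : ∀ u, 0 ≤ u ⬝ᵥ A *ᵥ u) (u : Fin p → ℝ) :
    lamMin A * ∑ k, u k ^ 2 ≤ u ⬝ᵥ A *ᵥ u := by
  obtain hu | hu := (sum_nonneg fun k _ => sq_nonneg (u k)).eq_or_lt
  · rw [← hu, mul_zero]
    exact hA u
  set c := √(∑ k, u k ^ 2)
  have hc : 0 < c := Real.sqrt_pos.2 hu
  have hc2 : c ^ 2 = ∑ k, u k ^ 2 := Real.sq_sqrt hu.le
  have hunit : ∑ k, (c⁻¹ • u) k ^ 2 = 1 := by
    simp only [Pi.smul_apply, smul_eq_mul, mul_pow, ← mul_sum, ← hc2]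
    field_simp
  -- without this lower bound the `⨅` defining `lamMin A` would take its junk value `0`
  have hbdd : BddBelow (Set.range fun v : {v : Fin p → ℝ // ∑ i, v i ^ 2 = 1} =>
      (v : Fin p → ℝ) ⬝ᵥ A *ᵥ v) := ⟨0, by rintro _ ⟨v, rfl⟩; exact hA v⟩
  have hle : lamMin A ≤ (c⁻¹ • u) ⬝ᵥ A *ᵥ (c⁻¹ • u) := ciInf_le hbdd ⟨c⁻¹ • u, hunit⟩
  rw [mulVec_smul, smul_dotProduct, dotProduct_smul, smul_eq_mul, smul_eq_mul, ← mul_assoc] at hle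
  rw [← hc2, ← le_div_iff₀ (by positivity)]
  exact hle.trans_eq (by ring)

theorem abs_sum_mul_le_sqrt_mul_sqrt {ι : Type*} (s : Finset ι) (f g : ι → ℝ) :
    |∑ i ∈ s, f i * g i| ≤ √(∑ i ∈ s, f i ^ 2) * √(∑ i ∈ s, g i ^ 2) :=
  (Real.abs_le_sqrt (sum_mul_sq_le_sq_mul_sq s f g)).trans_eq
    (Real.sqrt_mul (sum_nonneg fun i _ => sq_nonneg (f i)) _)

theorem sum_mul_self_eq_sum_mul_of_forall_le {ι : Type*} [Fintype ι] {r d : ι → ℝ}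
    (h : ∀ t : ℝ, ∑ i, (r i - d i) ^ 2 ≤ ∑ i, (r i - t * d i) ^ 2) :
    ∑ i, d i * d i = ∑ i, d i * r i := by
  have hexp : ∀ t : ℝ, ∑ i, (r i - t * d i) ^ 2
      = ∑ i, r i * r i - 2 * t * ∑ i, d i * r i + t ^ 2 * ∑ i, d i * d i := by
    intro t
    simp only [mul_sum, ← sum_sub_distrib, ← sum_add_distrib]
    exact sum_congr rfl fun i _ => by ring
  have hdisc := discrim_le_zero (a := ∑ i, d i * d i)
    (b := 2 * (∑ i, d i * d i - ∑ i, d i * r i)) (c := 0) fun s => by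
    have hat_one : ∑ i, (r i - d i) ^ 2 = ∑ i, (r i - 1 * d i) ^ 2 := by simp only [one_mul]
    have := h (1 + s)
    rw [hat_one, hexp, hexp] at this
    nlinarith
  rw [discrim] at hdisc
  nlinarith [sq_nonneg (∑ i, d i * d i - ∑ i, d i * r i)]

theorem dotProduct_eq_mulVec_dotProduct_inv_mulVec {ι R : Type*} [Fintype ι] [DecidableEq ι]
    [CommRing R] {S : Matrix ι ι R} (hS : S.IsSymm) (hdet : IsUnit S.det) (β w : ι → R) :
    β ⬝ᵥ w = (S *ᵥ β) ⬝ᵥ (S⁻¹ *ᵥ w) := by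
  rw [← vecMul_transpose, hS.eq, ← dotProduct_mulVec, mulVec_mulVec, mul_nonsing_inv _ hdet,
    one_mulVec]

section Empirical

variable {n m : ℕ}

noncomputable def empMean (a : Fin n → ℝ) : ℝ := (n : ℝ)⁻¹ * ∑ i, a i

noncomputable def empMeanVec (v : Fin n → Fin m → ℝ) : Fin m → ℝ :=
  fun k => empMean fun i => v i k

noncomputable def empGram (v : Fin n → Fin m → ℝ) : Matrix (Fin m) (Fin m) ℝ :=
  Matrix.of fun j k => empMean fun i => v i j * v i k

noncomputable def empCov (a b : Fin n → ℝ) : ℝ :=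
  empMean (fun i => a i * b i) - empMean a * empMean b

theorem sum_eq_mul_empMean (a : Fin n → ℝ) : ∑ i, a i = n * empMean a := by
  rcases eq_or_ne n 0 with rfl | hn
  · simp
  · rw [empMean, ← mul_assoc, mul_inv_cancel₀ (Nat.cast_ne_zero.2 hn), one_mul]

theorem empMean_sub (a b : Fin n → ℝ) : empMean (fun i => a i - b i) = empMean a - empMean b := by
  simp only [empMean, sum_sub_distrib, mul_sub]

theorem empMean_const (hn : n ≠ 0) (c : ℝ) : empMean (fun _ : Fin n => c) = c := by
  simp [empMean, hn]

theorem empMean_dotProduct (β : Fin m → ℝ) (v : Fin n → Fin m → ℝ) :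
    empMean (fun i => β ⬝ᵥ v i) = β ⬝ᵥ empMeanVec v := by
  simp only [empMean, empMeanVec, dotProduct, mul_sum]
  rw [sum_comm]
  exact sum_congr rfl fun k _ => sum_congr rfl fun i _ => by ring

theorem dotProduct_empGram_mulVec (v : Fin n → Fin m → ℝ) (u : Fin m → ℝ) :
    u ⬝ᵥ empGram v *ᵥ u = empMean fun i => (u ⬝ᵥ v i) * (u ⬝ᵥ v i) := by
  simp only [empGram, empMean, dotProduct, mulVec, of_apply, mul_sum, sum_mul]
  refine ((sum_congr rfl fun j _ => sum_comm).trans sum_comm).trans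
    (sum_congr rfl fun i _ => sum_congr rfl fun j _ => sum_congr rfl fun k _ => by ring)

theorem sum_sub_empMean_mul_sub_empMean (a b : Fin n → ℝ) :
    ∑ i, (a i - empMean a) * (b i - empMean b) = n * empCov a b := by
  have hexp : ∀ i, (a i - empMean a) * (b i - empMean b)
      = a i * b i - empMean b * a i - empMean a * b i + empMean a * empMean b := fun i => by ring
  simp only [hexp, sum_add_distrib, sum_sub_distrib, ← mul_sum, sum_const, card_univ,
    Fintype.card_fin, nsmul_eq_mul, sum_eq_mul_empMean a, sum_eq_mul_empMean b,
    sum_eq_mul_empMean fun i => a i * b i, empCov]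
  ring

theorem empCov_eq_of_isLeastSquares {y : Fin n → ℝ} {w : Fin n → Fin m → ℝ}
    {βstar βhat : Fin m → ℝ} (hn : n ≠ 0) (c : ℝ)
    (hβhat : ∀ β : Fin m → ℝ,
      ∑ i, (y i - empMean y - ∑ k, βhat k * (w i k - empMeanVec w k)) ^ 2
        ≤ ∑ i, (y i - empMean y - ∑ k, β k * (w i k - empMeanVec w k)) ^ 2) :
    empCov (fun i => (βhat - βstar) ⬝ᵥ w i) (fun i => (βhat - βstar) ⬝ᵥ w i)
      = empCov (fun i => (βhat - βstar) ⬝ᵥ w i) (fun i => y i - c - βstar ⬝ᵥ w i) := by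
  set b := βhat - βstar
  set e : Fin n → ℝ := fun i => y i - c - βstar ⬝ᵥ w i
  set D : Fin n → ℝ := fun i => b ⬝ᵥ w i
  have he : ∀ i, e i - empMean e = y i - empMean y - βstar ⬝ᵥ (w i - empMeanVec w) := fun i => by
    simp only [e, empMean_sub, empMean_const hn, empMean_dotProduct, dotProduct_sub]
    ring
  have hD : ∀ i, D i - empMean D = b ⬝ᵥ (w i - empMeanVec w) := fun i => by
    simp only [D, empMean_dotProduct, dotProduct_sub]
  have hline : ∀ (t : ℝ) i, y i - empMean y - ∑ k, (βstar + t • b) k * (w i k - empMeanVec w k)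
      = (e i - empMean e) - t * (D i - empMean D) := fun t i => by
    rw [he, hD]
    simp only [dotProduct, Pi.add_apply, Pi.smul_apply, Pi.sub_apply, smul_eq_mul, add_mul,
      sum_add_distrib, mul_assoc, ← mul_sum]
    ring
  have horth := sum_mul_self_eq_sum_mul_of_forall_le (r := fun i => e i - empMean e)
    (d := fun i => D i - empMean D) fun t => by
      have hβhateq : βhat = βstar + (1 : ℝ) • b := by rw [one_smul, add_sub_cancel]
      simpa only [hβhateq, hline, one_mul] using hβhat (βstar + t • b)
  rw [sum_sub_empMean_mul_sub_empMean, sum_sub_empMean_mul_sub_empMean] at horth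
  exact mul_left_cancel₀ (Nat.cast_ne_zero.2 hn) horth

theorem empMean_sub_dotProduct_sub {y : Fin n → ℝ} {w : Fin n → Fin m → ℝ}
    (βstar βhat : Fin m → ℝ) (hn : n ≠ 0) (c : ℝ) :
    empMean (fun i => y i - βhat ⬝ᵥ w i) - c
      = empMean (fun i => y i - c - βstar ⬝ᵥ w i) - empMean fun i => (βhat - βstar) ⬝ᵥ w i := by
  simp only [empMean_sub, empMean_const hn, empMean_dotProduct, sub_dotProduct]
  ring

theorem sqrt_sum_sq_le_of_empCov_eq {v : Fin n → Fin m → ℝ} {e : Fin n → ℝ}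
    {δ : Fin m → ℝ}
    (hkey : empCov (fun i => δ ⬝ᵥ v i) (fun i => δ ⬝ᵥ v i) = empCov (fun i => δ ⬝ᵥ v i) e)
    (hgap : ∑ k, empMeanVec v k ^ 2 < lamMin (empGram v)) :
    √(∑ k, δ k ^ 2)
      ≤ (√(∑ k, empMeanVec (fun i k => v i k * e i) k ^ 2)
          + √(∑ k, empMeanVec v k ^ 2) * |empMean e|)
        / (lamMin (empGram v) - ∑ k, empMeanVec v k ^ 2) := by
  set s := √(∑ k, δ k ^ 2)
  set S := ∑ k, empMeanVec v k ^ 2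
  set B := √(∑ k, empMeanVec (fun i k => v i k * e i) k ^ 2) + √S * |empMean e|
  have hs2 : s ^ 2 = ∑ k, δ k ^ 2 := Real.sq_sqrt (sum_nonneg fun k _ => sq_nonneg _)
  have hgram_nonneg : ∀ u, 0 ≤ u ⬝ᵥ empGram v *ᵥ u := fun u => by
    rw [dotProduct_empGram_mulVec]
    exact mul_nonneg (by positivity) (sum_nonneg fun i _ => mul_self_nonneg _)
  have hvar : (lamMin (empGram v) - S) * s ^ 2
      ≤ empCov (fun i => δ ⬝ᵥ v i) (fun i => δ ⬝ᵥ v i) := by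
    have hcs : (δ ⬝ᵥ empMeanVec v) ^ 2 ≤ (∑ k, δ k ^ 2) * S := sum_mul_sq_le_sq_mul_sq _ _ _
    have hlam := lamMin_mul_sum_sq_le hgram_nonneg δ
    rw [empCov, ← dotProduct_empGram_mulVec, empMean_dotProduct]
    nlinarith
  have hcov : empCov (fun i => δ ⬝ᵥ v i) e ≤ s * B := by
    have hmul : (fun i => (δ ⬝ᵥ v i) * e i) = fun i => δ ⬝ᵥ fun k => v i k * e i := by
      simp only [dotProduct, sum_mul, mul_assoc]
    have hcross : δ ⬝ᵥ empMeanVec (fun i k => v i k * e i)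
        ≤ s * √(∑ k, empMeanVec (fun i k => v i k * e i) k ^ 2) :=
      Real.sum_mul_le_sqrt_mul_sqrt _ _ _
    have hmean : -((δ ⬝ᵥ empMeanVec v) * empMean e) ≤ s * √S * |empMean e| := by
      refine (neg_le_abs _).trans ?_
      rw [abs_mul]
      exact mul_le_mul_of_nonneg_right (abs_sum_mul_le_sqrt_mul_sqrt _ _ _) (abs_nonneg _)
    rw [empCov, hmul, empMean_dotProduct, empMean_dotProduct]
    linarith
  rw [le_div_iff₀ (sub_pos.2 hgap)]
  rcases (Real.sqrt_nonneg _ : 0 ≤ s).eq_or_lt with hs | hs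
  · rw [show s = 0 from hs.symm, zero_mul]
    positivity
  · exact le_of_mul_le_mul_left (by nlinarith) hs

end Empirical

theorem ols_deterministic_error_bound_general
    {𝒳 : Type*} [MeasurableSpace 𝒳] (P : Measure 𝒳)
    (m : ℕ) (f : 𝒳 → ℝ) (h : Fin m → 𝒳 → ℝ)
    (βstar : Fin m → ℝ)
    (G : Matrix (Fin m) (Fin m) ℝ)
    (hGpd : G.PosDef)
    -- `Gs = G^{1/2}`: the (unique) positive semidefinite square root of `G`
    (Gs : Matrix (Fin m) (Fin m) ℝ) (hGs : Gs.PosSemidef ∧ Gs * Gs = G)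
    (n : ℕ) (hn : 0 < n) (X : Fin n → 𝒳)
    (βhat : Fin m → ℝ)
    (hβhat : ∀ β : Fin m → ℝ,
      (∑ i, (f (X i) - (n : ℝ)⁻¹ * (∑ i', f (X i'))
          - ∑ k, βhat k * (h k (X i) - (n : ℝ)⁻¹ * ∑ i', h k (X i'))) ^ 2)
        ≤ ∑ i, (f (X i) - (n : ℝ)⁻¹ * (∑ i', f (X i'))
          - ∑ k, β k * (h k (X i) - (n : ℝ)⁻¹ * ∑ i', h k (X i'))) ^ 2) :
    -- notation: residual ε, ortho-normalized controls ℏ and the empirical moments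
    let ε : 𝒳 → ℝ := fun x => f x - (∫ y, f y ∂P) - ∑ k, βstar k * h k x
    let ℏ : 𝒳 → Fin m → ℝ := fun x => Gs⁻¹.mulVec (fun j => h j x)
    let Pnε : ℝ := (n : ℝ)⁻¹ * ∑ i, ε (X i)
    let Pnℏ : Fin m → ℝ := fun k => (n : ℝ)⁻¹ * ∑ i, ℏ (X i) k
    let Pnℏε : Fin m → ℝ := fun k => (n : ℝ)⁻¹ * ∑ i, ℏ (X i) k * ε (X i)
    let Gn : Matrix (Fin m) (Fin m) ℝ :=
      Matrix.of fun j k => (n : ℝ)⁻¹ * ∑ i, ℏ (X i) j * ℏ (X i) k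
    -- hypothesis: λ_min(Pₙ(ℏℏᵀ)) > ‖Pₙ(ℏ)‖₂²
    (∑ k, Pnℏ k ^ 2) < lamMin Gn →
    -- conclusions
    (Real.sqrt (∑ k, (Gs.mulVec (fun j => βhat j - βstar j)) k ^ 2)
        ≤ (Real.sqrt (∑ k, Pnℏε k ^ 2)
            + Real.sqrt (∑ k, Pnℏ k ^ 2) * |Pnε|)
          / (lamMin Gn - ∑ k, Pnℏ k ^ 2))
    ∧ |(n : ℝ)⁻¹ * (∑ i, (f (X i) - ∑ k, βhat k * h k (X i))) - ∫ y, f y ∂P|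
        ≤ |Pnε|
          + (Real.sqrt (∑ k, Pnℏε k ^ 2)
              + Real.sqrt (∑ k, Pnℏ k ^ 2) * |Pnε|)
            / (lamMin Gn - ∑ k, Pnℏ k ^ 2)
            * Real.sqrt (∑ k, Pnℏ k ^ 2) := by
  intro ε ℏ Pnε Pnℏ Pnℏε Gn hgap
  obtain ⟨hGs_psd, hGs_sq⟩ := hGs
  have hunit : IsUnit Gs.det := isUnit_iff_ne_zero.2 fun h0 => by
    simpa [← hGs_sq, h0] using hGpd.det_pos
  set δ := Gs *ᵥ (βhat - βstar)
  have hδ : ∀ x, (βhat - βstar) ⬝ᵥ (fun k => h k x) = δ ⬝ᵥ ℏ x := fun x =>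
    dotProduct_eq_mulVec_dotProduct_inv_mulVec (isHermitian_iff_isSymm.1 hGs_psd.1) hunit _ _
  have hkey := empCov_eq_of_isLeastSquares (y := fun i => f (X i)) (w := fun i k => h k (X i))
    (βstar := βstar) hn.ne' (∫ y, f y ∂P) hβhat
  simp only [hδ] at hkey
  have hbound := sqrt_sum_sq_le_of_empCov_eq (e := fun i => ε (X i)) hkey hgap
  refine ⟨hbound, ?_⟩
  have hα := empMean_sub_dotProduct_sub (y := fun i => f (X i)) (w := fun i k => h k (X i))
    βstar βhat hn.ne' (∫ y, f y ∂P)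
  simp only [hδ, empMean_dotProduct] at hα
  calc _ = |Pnε - δ ⬝ᵥ Pnℏ| := congrArg abs hα
    _ ≤ |Pnε| + √(∑ k, δ k ^ 2) * √(∑ k, Pnℏ k ^ 2) :=
      (abs_sub _ _).trans (by gcongr; exact abs_sum_mul_le_sqrt_mul_sqrt _ _ _)
    _ ≤ _ := by gcongr; exact hbound

/-- Deterministic bound on the OLS coefficient error (Steps 1–2 of the
proof of Theorem 1).  With `ℏ = G^{-1/2}h`, `η* = G^{1/2}β*` and `η̂ = G^{1/2}β̂ₙᵒˡˢ`:
if `λ_min(Pₙ(ℏℏᵀ)) > ‖Pₙ(ℏ)‖₂²` then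
`‖η̂−η*‖₂ ≤ (‖Pₙ(ℏε)‖₂ + ‖Pₙ(ℏ)‖₂|Pₙ(ε)|)/(λ_min(Pₙ(ℏℏᵀ)) − ‖Pₙ(ℏ)‖₂²)` and
`|α̂ₙᵒˡˢ(f) − P(f)| ≤ |Pₙ(ε)| + (above) · ‖Pₙ(ℏ)‖₂`. -/
theorem ols_deterministic_error_bound
    {𝒳 : Type*} [MeasurableSpace 𝒳] (P : Measure 𝒳) [IsProbabilityMeasure P]
    (m : ℕ) (f : 𝒳 → ℝ) (h : Fin m → 𝒳 → ℝ)
    (hfL2 : MeasureTheory.MemLp f 2 P) (hhL2 : ∀ k, MeasureTheory.MemLp (h k) 2 P)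
    (hh0 : ∀ k, ∫ x, h k x ∂P = 0)
    (βstar : Fin m → ℝ)
    (hβstar : ∀ β : Fin m → ℝ,
      ∫ x, (f x - (∫ y, f y ∂P) - ∑ k, βstar k * h k x) ^ 2 ∂P ≤
        ∫ x, (f x - (∫ y, f y ∂P) - ∑ k, β k * h k x) ^ 2 ∂P)
    (G : Matrix (Fin m) (Fin m) ℝ)
    (hG : ∀ j k, G j k = ∫ x, h j x * h k x ∂P)
    (hGpd : G.PosDef)
    -- `Gs = G^{1/2}`: the (unique) positive semidefinite square root of `G`
    (Gs : Matrix (Fin m) (Fin m) ℝ) (hGs : Gs.PosSemidef ∧ Gs * Gs = G)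
    (n : ℕ) (hn : 0 < n) (X : Fin n → 𝒳)
    (βhat : Fin m → ℝ)
    (hβhat : ∀ β : Fin m → ℝ,
      (∑ i, (f (X i) - (n : ℝ)⁻¹ * (∑ i', f (X i'))
          - ∑ k, βhat k * (h k (X i) - (n : ℝ)⁻¹ * ∑ i', h k (X i'))) ^ 2)
        ≤ ∑ i, (f (X i) - (n : ℝ)⁻¹ * (∑ i', f (X i'))
          - ∑ k, β k * (h k (X i) - (n : ℝ)⁻¹ * ∑ i', h k (X i'))) ^ 2) :
    -- notation: residual ε, ortho-normalized controls ℏ and the empirical moments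
    let ε : 𝒳 → ℝ := fun x => f x - (∫ y, f y ∂P) - ∑ k, βstar k * h k x
    let ℏ : 𝒳 → Fin m → ℝ := fun x => Gs⁻¹.mulVec (fun j => h j x)
    let Pnε : ℝ := (n : ℝ)⁻¹ * ∑ i, ε (X i)
    let Pnℏ : Fin m → ℝ := fun k => (n : ℝ)⁻¹ * ∑ i, ℏ (X i) k
    let Pnℏε : Fin m → ℝ := fun k => (n : ℝ)⁻¹ * ∑ i, ℏ (X i) k * ε (X i)
    let Gn : Matrix (Fin m) (Fin m) ℝ :=
      Matrix.of fun j k => (n : ℝ)⁻¹ * ∑ i, ℏ (X i) j * ℏ (X i) k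
    -- hypothesis: λ_min(Pₙ(ℏℏᵀ)) > ‖Pₙ(ℏ)‖₂²
    (∑ k, Pnℏ k ^ 2) < lamMin Gn →
    -- conclusions
    (Real.sqrt (∑ k, (Gs.mulVec (fun j => βhat j - βstar j)) k ^ 2)
        ≤ (Real.sqrt (∑ k, Pnℏε k ^ 2)
            + Real.sqrt (∑ k, Pnℏ k ^ 2) * |Pnε|)
          / (lamMin Gn - ∑ k, Pnℏ k ^ 2))
    ∧ |(n : ℝ)⁻¹ * (∑ i, (f (X i) - ∑ k, βhat k * h k (X i))) - ∫ y, f y ∂P|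
        ≤ |Pnε|
          + (Real.sqrt (∑ k, Pnℏε k ^ 2)
              + Real.sqrt (∑ k, Pnℏ k ^ 2) * |Pnε|)
            / (lamMin Gn - ∑ k, Pnℏ k ^ 2)
            * Real.sqrt (∑ k, Pnℏ k ^ 2) :=
  ols_deterministic_error_bound_general P m f h βstar G hGpd Gs hGs n hn X βhat hβhat
end
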